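/- Let 𝕏 ⊂ ℝ^d be compact and 𝕌 ⊂ ℝ^m be convex and compact. Suppose θ : 𝕏 × 𝕌 → ℝ is such that: for each x ∈ 𝕏 the map u ↦ θ(x,u) is twice continuously differentiable on 𝕌; the gradient D_u θ(·, u) is Lipschitz in x uniformly in u ∈ 𝕌; and the Hessian D²_u θ is uniformly positive definite on 𝕏 × 𝕌 (there is λ > 0 with ⟨v, D²_u θ(x,u) v⟩ ≥ λ‖v‖² for all v). Then the map x ↦ argmin_{u ∈ 𝕌} θ(x,u) (which is single-valued by strict convexity) is Lipschitz continuous on 𝕏. -/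
import Mathlib

open Set

theorem stmt_7 (dX m : ℕ)
    (X : Set (EuclideanSpace ℝ (Fin dX))) (U : Set (EuclideanSpace ℝ (Fin m)))
    (hX : IsCompact X) (hUconv : Convex ℝ U) (hUcomp : IsCompact U) (hUne : U.Nonempty)
    (θ : EuclideanSpace ℝ (Fin dX) → EuclideanSpace ℝ (Fin m) → ℝ)
    (hC2 : ∀ x ∈ X, ContDiffOn ℝ 2 (θ x) U)
    (K : ℝ)
    (hgradLip : ∀ u ∈ U, ∀ x₁ ∈ X, ∀ x₂ ∈ X,
      ‖fderiv ℝ (θ x₁) u - fderiv ℝ (θ x₂) u‖ ≤ K * ‖x₁ - x₂‖)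
    (lam : ℝ) (hlam : 0 < lam)
    (hHess : ∀ x ∈ X, ∀ u ∈ U, ∀ v : EuclideanSpace ℝ (Fin m),
      (fderiv ℝ (fun w => fderiv ℝ (θ x) w) u v) v ≥ lam * ‖v‖ ^ 2) :
    ∃ ustar : EuclideanSpace ℝ (Fin dX) → EuclideanSpace ℝ (Fin m),
      (∀ x ∈ X, ustar x ∈ U ∧ IsMinOn (θ x) U (ustar x)) ∧
      ∃ L : NNReal, LipschitzOnWith L ustar X := by
  classical
  have hmin : ∀ x, x ∈ X → ∃ u ∈ U, IsMinOn (θ x) U u := fun x hx =>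
    hUcomp.exists_isMinOn hUne ((hC2 x hx).continuousOn)
  set ustar : EuclideanSpace ℝ (Fin dX) → EuclideanSpace ℝ (Fin m) :=
    fun x => if h : x ∈ X then (hmin x h).choose else hUne.choose with hustar
  have hmem : ∀ x, ∀ h : x ∈ X, ustar x ∈ U ∧ IsMinOn (θ x) U (ustar x) := by
    intro x h
    simp only [hustar, dif_pos h]
    exact (hmin x h).choose_spec
  refine ⟨ustar, fun x hx => hmem x hx, Real.toNNReal (K / lam), ?_⟩
  -- Variational inequality at the minimizer
  have VI : ∀ x ∈ X, ∀ u ∈ U, 0 ≤ fderiv ℝ (θ x) (ustar x) (u - ustar x) := by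
    intro x hx u hu
    obtain ⟨hmemU, hminx⟩ := hmem x hx
    by_cases hd : DifferentiableAt ℝ (θ x) (ustar x)
    · set d := u - ustar x with hdd
      set g : ℝ → ℝ := fun t => θ x (ustar x + t • d) with hg
      have hseg : ∀ t : ℝ, t ∈ Icc (0:ℝ) 1 → ustar x + t • d ∈ U := by
        intro t ht
        have : (1 - t) • ustar x + t • u ∈ U :=
          hUconv hmemU hu (by linarith [ht.2]) ht.1 (by ring)
        convert this using 1
        rw [hdd]; module
      have hline : HasDerivAt (fun t : ℝ => ustar x + t • d) d 0 := by
        simpa using ((hasDerivAt_id (0:ℝ)).smul_const d).const_add (ustar x)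
      have hd' : HasFDerivAt (θ x) (fderiv ℝ (θ x) (ustar x)) ((fun t : ℝ => ustar x + t • d) 0) := by
        simpa using hd.hasFDerivAt
      have hgd : HasDerivAt g (fderiv ℝ (θ x) (ustar x) d) 0 := hd'.comp_hasDerivAt 0 hline
      -- slope nonneg on the right
      have hsl : Filter.Tendsto (fun t => t⁻¹ * (g t - g 0)) (nhdsWithin 0 (Ioi (0:ℝ)))
          (nhds (fderiv ℝ (θ x) (ustar x) d)) := by
        have := hgd.tendsto_slope_zero_right
        simpa [slope_def_field] using this
      have hev : ∀ᶠ t in nhdsWithin 0 (Ioi (0:ℝ)), 0 ≤ t⁻¹ * (g t - g 0) := by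
        filter_upwards [Ioc_mem_nhdsGT_of_mem (by norm_num : (0:ℝ) ∈ Ico (0:ℝ) 1)] with t ht
        have h1 : g 0 ≤ g t := by
          have hmem' := hseg t ⟨le_of_lt ht.1, ht.2⟩
          have := hminx hmem'
          simpa [hg] using this
        exact mul_nonneg (inv_nonneg.mpr (le_of_lt ht.1)) (by linarith)
      exact ge_of_tendsto hsl hev
    · rw [fderiv_zero_of_not_differentiableAt hd]
      simp
  -- Strong monotonicity of the gradient along U
  have mono : ∀ x ∈ X, ∀ u₁ ∈ U, ∀ u₂ ∈ U, u₁ ≠ u₂ →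
      lam * ‖u₁ - u₂‖ ^ 2 ≤ fderiv ℝ (θ x) u₁ (u₁ - u₂) - fderiv ℝ (θ x) u₂ (u₁ - u₂) := by
    intro x hx u₁ hu₁ u₂ hu₂ hne
    set d := u₁ - u₂ with hdd
    have hd0 : d ≠ 0 := sub_ne_zero.mpr hne
    have hdn : 0 < ‖d‖ := norm_pos_iff.mpr hd0
    have hdiff : ∀ w ∈ U, DifferentiableAt ℝ (fun w => fderiv ℝ (θ x) w) w := by
      intro w hw
      by_contra hcon
      have h1 := hHess x hx w hw d
      rw [fderiv_zero_of_not_differentiableAt hcon] at h1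
      simp only [ContinuousLinearMap.zero_apply] at h1
      nlinarith [mul_pos hlam (pow_pos hdn 2)]
    have hseg : ∀ t : ℝ, t ∈ Icc (0:ℝ) 1 → u₂ + t • d ∈ U := by
      intro t ht
      have : (1 - t) • u₂ + t • u₁ ∈ U :=
        hUconv hu₂ hu₁ (by linarith [ht.2]) ht.1 (by ring)
      convert this using 1
      rw [hdd]; module
    set φ : ℝ → ℝ := fun t => fderiv ℝ (θ x) (u₂ + t • d) d with hφdef
    have hφ : ∀ t ∈ Icc (0:ℝ) 1, HasDerivAt φ
        (fderiv ℝ (fun w => fderiv ℝ (θ x) w) (u₂ + t • d) d d) t := by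
      intro t ht
      have hline : HasDerivAt (fun s : ℝ => u₂ + s • d) d t := by
        simpa using ((hasDerivAt_id t).smul_const d).const_add u₂
      have hF : HasFDerivAt (fun w => fderiv ℝ (θ x) w)
          (fderiv ℝ (fun w => fderiv ℝ (θ x) w) (u₂ + t • d)) ((fun s : ℝ => u₂ + s • d) t) :=
        (hdiff _ (hseg t ht)).hasFDerivAt
      have h2 : HasDerivAt (fun s : ℝ => fderiv ℝ (θ x) (u₂ + s • d))
          (fderiv ℝ (fun w => fderiv ℝ (θ x) w) (u₂ + t • d) d) t :=
        hF.comp_hasDerivAt t hline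
      have h3 := h2.clm_apply (hasDerivAt_const t d)
      simpa using h3
    obtain ⟨c, hc, hceq⟩ := exists_hasDerivAt_eq_slope φ
      (fun t => fderiv ℝ (fun w => fderiv ℝ (θ x) w) (u₂ + t • d) d d) zero_lt_one
      (fun t ht => (hφ t ht).continuousAt.continuousWithinAt)
      (fun t ht => hφ t (Ioo_subset_Icc_self ht))
    have hcU : u₂ + c • d ∈ U := hseg c (Ioo_subset_Icc_self hc)
    have hH := hHess x hx _ hcU d
    have hφ1 : φ 1 = fderiv ℝ (θ x) u₁ d := by
      have : u₂ + (1:ℝ) • d = u₁ := by rw [hdd]; module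
      rw [hφdef]; simp only []; rw [this]
    have hφ0 : φ 0 = fderiv ℝ (θ x) u₂ d := by
      have : u₂ + (0:ℝ) • d = u₂ := by module
      rw [hφdef]; simp only []; rw [this]
    rw [hφ1, hφ0] at hceq
    have : fderiv ℝ (fun w => fderiv ℝ (θ x) w) (u₂ + c • d) d d
        = fderiv ℝ (θ x) u₁ d - fderiv ℝ (θ x) u₂ d := by
      rw [hceq]; ring
    linarith [hH, this ▸ hH]
  -- Lipschitz estimate
  rw [lipschitzOnWith_iff_dist_le_mul]
  intro x₁ hx₁ x₂ hx₂
  set u₁ := ustar x₁ with hu₁def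
  set u₂ := ustar x₂ with hu₂def
  obtain ⟨hu₁U, hmin₁⟩ := hmem x₁ hx₁
  obtain ⟨hu₂U, hmin₂⟩ := hmem x₂ hx₂
  by_cases hne : u₁ = u₂
  · rw [hne]
    simp only [dist_self]
    positivity
  · set d := u₁ - u₂ with hdd
    have hd0 : d ≠ 0 := sub_ne_zero.mpr hne
    have hdn : 0 < ‖d‖ := norm_pos_iff.mpr hd0
    have hmono := mono x₁ hx₁ u₁ hu₁U u₂ hu₂U hne
    have hVI1 : 0 ≤ fderiv ℝ (θ x₁) u₁ (u₂ - u₁) := VI x₁ hx₁ u₂ hu₂U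
    have hVI2 : 0 ≤ fderiv ℝ (θ x₂) u₂ (u₁ - u₂) := VI x₂ hx₂ u₁ hu₁U
    have hVI1' : fderiv ℝ (θ x₁) u₁ (u₁ - u₂) ≤ 0 := by
      have : fderiv ℝ (θ x₁) u₁ (u₂ - u₁) = -(fderiv ℝ (θ x₁) u₁ (u₁ - u₂)) := by
        rw [← ContinuousLinearMap.map_neg]; congr 1; abel
      linarith [this ▸ hVI1]
    have hkey : lam * ‖d‖ ^ 2 ≤ fderiv ℝ (θ x₂) u₂ d - fderiv ℝ (θ x₁) u₂ d := by
      rw [hdd]; linarith [hmono, hVI1', hVI2]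
    have hbound : fderiv ℝ (θ x₂) u₂ d - fderiv ℝ (θ x₁) u₂ d ≤ K * ‖x₂ - x₁‖ * ‖d‖ := by
      have h1 : fderiv ℝ (θ x₂) u₂ d - fderiv ℝ (θ x₁) u₂ d
          = (fderiv ℝ (θ x₂) u₂ - fderiv ℝ (θ x₁) u₂) d := by
        simp [ContinuousLinearMap.sub_apply]
      rw [h1]
      calc (fderiv ℝ (θ x₂) u₂ - fderiv ℝ (θ x₁) u₂) d
          ≤ ‖(fderiv ℝ (θ x₂) u₂ - fderiv ℝ (θ x₁) u₂) d‖ := le_abs_self _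
        _ ≤ ‖fderiv ℝ (θ x₂) u₂ - fderiv ℝ (θ x₁) u₂‖ * ‖d‖ :=
            ContinuousLinearMap.le_opNorm _ _
        _ ≤ K * ‖x₂ - x₁‖ * ‖d‖ :=
            mul_le_mul_of_nonneg_right (hgradLip u₂ hu₂U x₂ hx₂ x₁ hx₁) (norm_nonneg _)
    have hstep : lam * ‖d‖ ≤ K * ‖x₂ - x₁‖ := by
      have h2 : lam * ‖d‖ * ‖d‖ ≤ K * ‖x₂ - x₁‖ * ‖d‖ := by nlinarith
      exact le_of_mul_le_mul_right h2 hdn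
    have hfin : ‖d‖ ≤ (K / lam) * ‖x₂ - x₁‖ := by
      rw [div_mul_eq_mul_div, le_div_iff₀ hlam]
      nlinarith
    rw [dist_eq_norm, dist_eq_norm]
    calc ‖u₁ - u₂‖ = ‖d‖ := by rw [hdd]
      _ ≤ (K / lam) * ‖x₂ - x₁‖ := hfin
      _ ≤ (Real.toNNReal (K / lam) : ℝ) * ‖x₁ - x₂‖ := by
          rw [norm_sub_rev x₂ x₁, Real.coe_toNNReal']
          exact mul_le_mul_of_nonneg_right (le_max_left _ _) (norm_nonneg _)
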